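/- arXiv:1401.5653 — 4 statements merged into one kernel-verified Lean document; each statement's English description precedes it below -/
import Mathlib

section
/- For every positive integer n and every nonnegative integer k, the number of inversion tables e of length n with row(e) = k equals the number of permutations π of {1,...,n} with des(π) = k (the Eulerian number). -/
/-- The descent set of a permutation `π` of `{1,...,n}` (1-indexed):
`DES(π) = {i ∈ {1,...,n-1} : π_i > π_{i+1}}`.  Here `π_i` is `π ⟨i-1, _⟩`
since `Fin n` is 0-indexed. -/
def permDES (n : ℕ) (π : Equiv.Perm (Fin n)) : Finset ℕ :=
  (Finset.Ico 1 n).filter fun i =>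
    ∃ h : i < n, ∃ h' : i - 1 < n, π ⟨i, h⟩ < π ⟨i - 1, h'⟩

/-- `des(π)`, the number of descents of `π`. -/
def permDes (n : ℕ) (π : Equiv.Perm (Fin n)) : ℕ := (permDES n π).card

/-- `ides(π) = des(π⁻¹)`. -/
def permIdes (n : ℕ) (π : Equiv.Perm (Fin n)) : ℕ := permDes n π⁻¹

/-- `maj(π)`, the sum of the elements of `DES(π)`. -/
def permMaj (n : ℕ) (π : Equiv.Perm (Fin n)) : ℕ := ∑ i ∈ permDES n π, i

/-- An inversion table of length `n`: a sequence `e_1 … e_n` with `1 ≤ e_i ≤ i`.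
The entry `e_i` (for `1 ≤ i ≤ n`) is `e.1 ⟨i-1, _⟩`. -/
abbrev InvTable (n : ℕ) :=
  {e : Fin n → Fin (n + 1) // ∀ i : Fin n, 1 ≤ (e i : ℕ) ∧ (e i : ℕ) ≤ (i : ℕ) + 1}

/-- The ascent set `ASC(e) = {i ∈ {1,...,n-1} : e_i < e_{i+1}}`. -/
def invASC (n : ℕ) (e : InvTable n) : Finset ℕ :=
  (Finset.Ico 1 n).filter fun i =>
    ∃ h : i < n, ∃ h' : i - 1 < n, (e.1 ⟨i - 1, h'⟩ : ℕ) < (e.1 ⟨i, h⟩ : ℕ)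

/-- `asc(e)`, the number of ascents of `e`. -/
def invAsc (n : ℕ) (e : InvTable n) : ℕ := (invASC n e).card

/-- `ROW(e) = {e_i : 1 ≤ i ≤ n} \ {1}`. -/
def invROW (n : ℕ) (e : InvTable n) : Finset ℕ :=
  (Finset.image (fun i : Fin n => (e.1 i : ℕ)) Finset.univ) \ {1}

/-- `row(e) = #ROW(e)`. -/
def invRow (n : ℕ) (e : InvTable n) : ℕ := (invROW n e).card

/-- `amaj(e)`, the sum of the elements of `ASC(e)`. -/
def invAmaj (n : ℕ) (e : InvTable n) : ℕ := ∑ i ∈ invASC n e, i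

/-!
Both statistics obey the Eulerian recurrence `A(n+1,k) = (k+1) A(n,k) + (n+1-k) A(n,k-1)`, via
an `(n+1)`-to-one insertion map. Appending an entry `v+1` to an inversion table `e` keeps
`row(e)` when `v+1 ∈ ROW(e) ∪ {1}` (that is `row(e)+1` choices) and raises it by one otherwise.
Inserting the largest letter into the word of a permutation `σ` keeps `des(σ)` when it goes at
the end or between the two letters of a descent (`des(σ)+1` choices) and raises it by one
otherwise. So the two distributions agree by induction on `n`.
-/

open Finset

theorem card_filter_mem_of_injective {α β : Type*} [Fintype α] [DecidableEq β] {f : α → β}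
    (hf : Function.Injective f) {S : Finset β} (hS : ∀ x ∈ S, x ∈ Set.range f) :
    #{a | f a ∈ S} = #S := by
  refine card_nbij f (fun a ha => (mem_filter.1 ha).2) hf.injOn fun x hx => ?_
  obtain ⟨a, rfl⟩ := hS x hx
  exact ⟨a, mem_filter.2 ⟨mem_univ a, hx⟩, rfl⟩

theorem card_filter_eq_sum_card_fiber {α β γ : Type*} [Fintype α] [Fintype β] [Fintype γ]
    (F : α × γ ≃ β) (P : β → Prop) [DecidablePred P] :
    #{b | P b} = ∑ a, #{c | P (F (a, c))} := by
  simp only [card_filter, ← F.sum_comp, Fintype.sum_prod_type]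

section EulerianRefinement

variable {α α' β β' γ : Type*} [Fintype γ]

/-- The fibre structure of an insertion proof of the Eulerian recurrence, with `γ = Fin (n + 1)`
the insertion positions. -/
structure IsEulerianRefinement (F : α × γ ≃ β) (s : α → ℕ) (t : β → ℕ) : Prop where
  eq_or_eq_succ : ∀ a c, t (F (a, c)) = s a ∨ t (F (a, c)) = s a + 1
  card_filter_eq : ∀ a, #{c | t (F (a, c)) = s a} = s a + 1

namespace IsEulerianRefinement

variable {F : α × γ ≃ β} {s : α → ℕ} {t : β → ℕ}

theorem of_forall_eq_ite (P : α → γ → Prop) [∀ a, DecidablePred (P a)]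
    (ht : ∀ a c, t (F (a, c)) = if P a c then s a else s a + 1)
    (hP : ∀ a, #{c | P a c} = s a + 1) : IsEulerianRefinement F s t where
  eq_or_eq_succ a c := by
    rw [ht]
    split_ifs <;> simp
  card_filter_eq a := by
    rw [← hP a]
    congr 1
    ext c
    rw [mem_filter, mem_filter, ht]
    split_ifs <;> simp_all

theorem card_filter_fiber (h : IsEulerianRefinement F s t) (a : α) (k : ℕ) :
    #{c | t (F (a, c)) = k} =
      if k = s a then s a + 1 else if k = s a + 1 then Fintype.card γ - (s a + 1) else 0 := by
  classical
  split_ifs with h₀ h₁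
  · rw [h₀, h.card_filter_eq]
  · have hcompl : #{c | t (F (a, c)) = k} = #{c | ¬ t (F (a, c)) = s a} := by
      congr 1
      ext c
      have := h.eq_or_eq_succ a c
      simp only [mem_filter, mem_univ, true_and]
      omega
    rw [hcompl, filter_not, card_sdiff_of_subset (filter_subset _ _), h.card_filter_eq,
      card_univ]
  · rw [card_eq_zero, filter_eq_empty_iff]
    rintro c -
    rcases h.eq_or_eq_succ a c with hc | hc <;> omega

variable [Fintype α] [Fintype α'] [Fintype β] [Fintype β']

theorem card_filter_eq_of_forall_card_filter_eq {F' : α' × γ ≃ β'} {s' : α' → ℕ}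
    {t' : β' → ℕ} (h : IsEulerianRefinement F s t) (h' : IsEulerianRefinement F' s' t')
    (hs : ∀ k, #{a | s a = k} = #{a | s' a = k}) (k : ℕ) :
    #{b | t b = k} = #{b | t' b = k} := by
  -- `s` and `s'` are equidistributed, so an equivalence `α ≃ α'` carries `s` to `s'`; the
  -- fibre counts of `t` depend only on `s a`.
  have fiber (j : ℕ) : {a // s a = j} ≃ {a // s' a = j} :=
    Fintype.equivOfCardEq (by simpa [Fintype.card_subtype] using hs j)
  rw [card_filter_eq_sum_card_fiber F, card_filter_eq_sum_card_fiber F',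
    ← (Equiv.ofFiberEquiv fiber).sum_comp]
  refine sum_congr rfl fun a _ => ?_
  rw [h.card_filter_fiber, h'.card_filter_fiber, Equiv.ofFiberEquiv_map fiber a]

end IsEulerianRefinement

end EulerianRefinement

def descentsOf (n : ℕ) (w : ℕ → ℕ) : Finset ℕ := {i ∈ Ico 1 n | w i < w (i - 1)}

def insertAt (w : ℕ → ℕ) (p x : ℕ) (i : ℕ) : ℕ :=
  if i < p then w i else if i = p then x else w (i - 1)

section Descents

variable {n p x : ℕ} {w : ℕ → ℕ}

theorem mem_descentsOf {i : ℕ} :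
    i ∈ descentsOf n w ↔ 1 ≤ i ∧ i < n ∧ w i < w (i - 1) := by
  simp [descentsOf, and_assoc]

theorem insertAt_succAbove (p : Fin (n + 1)) (j : Fin n) :
    insertAt w p x (p.succAbove j) = w j := by
  rcases lt_or_ge j.castSucc p with hj | hj
  · rw [Fin.succAbove_of_castSucc_lt _ _ hj]
    have : (j : ℕ) < p := hj
    simp [insertAt, this]
  · rw [Fin.succAbove_of_le_castSucc _ _ hj]
    have : (p : ℕ) ≤ j := hj
    simp [insertAt, show ¬ (j : ℕ) + 1 < p by omega, show (j : ℕ) + 1 ≠ p by omega]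

theorem mem_descentsOf_insertAt (hw : ∀ i < n, w i < x) (hp : p < n) (i : ℕ) :
    i ∈ descentsOf (n + 1) (insertAt w p x) ↔
      i = p + 1 ∨ (i < p ∧ i ∈ descentsOf n w) ∨
        (p + 1 < i ∧ i - 1 ∈ descentsOf n w) := by
  have h₁ := hw (i - 1)
  have h₂ := hw p
  simp only [mem_descentsOf, insertAt]
  split_ifs <;> omega

theorem descentsOf_insertAt_self (hw : ∀ i < n, w i < x) :
    descentsOf (n + 1) (insertAt w n x) = descentsOf n w := by
  ext i
  have h₁ := hw (i - 1)
  simp only [mem_descentsOf, insertAt]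
  split_ifs <;> omega

theorem descentsOf_insertAt (hw : ∀ i < n, w i < x) (hp : p < n) :
    descentsOf (n + 1) (insertAt w p x) =
      insert (p + 1) (((descentsOf n w).erase p).image fun j => if j < p then j else j + 1) := by
  ext i
  rw [mem_descentsOf_insertAt hw hp, mem_insert, mem_image]
  constructor
  · rintro (rfl | ⟨hi, hmem⟩ | ⟨hi, hmem⟩)
    · exact .inl rfl
    · exact .inr ⟨i, mem_erase.2 ⟨hi.ne, hmem⟩, if_pos hi⟩
    · exact .inr ⟨i - 1, mem_erase.2 ⟨by omega, hmem⟩, by rw [if_neg (by omega)]; omega⟩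
  · rintro (rfl | ⟨j, hj, rfl⟩)
    · exact .inl rfl
    · obtain ⟨hjp, hj⟩ := mem_erase.1 hj
      split_ifs with hlt
      · exact .inr (.inl ⟨hlt, hj⟩)
      · exact .inr (.inr ⟨by omega, by simpa using hj⟩)

theorem card_descentsOf_insertAt (hw : ∀ i < n, w i < x) (hp : p ≤ n) :
    #(descentsOf (n + 1) (insertAt w p x)) =
      if p ∈ insert n (descentsOf n w) then #(descentsOf n w) else #(descentsOf n w) + 1 := by
  rcases hp.eq_or_lt with rfl | hlt
  · rw [descentsOf_insertAt_self hw, if_pos (mem_insert_self _ _)]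
  have hshift : StrictMono fun j => if j < p then j else j + 1 := by
    intro a b hab
    dsimp only
    split_ifs <;> omega
  rw [descentsOf_insertAt hw hlt, card_insert_of_notMem, card_image_of_injective _ hshift.injective]
  · by_cases hmem : p ∈ descentsOf n w
    · rw [if_pos (mem_insert_of_mem hmem), card_erase_add_one hmem]
    · rw [if_neg (by simp [hmem, hlt.ne]), erase_eq_of_notMem hmem]
  · simp only [mem_image, mem_erase, not_exists, not_and]
    intro j hj
    split_ifs <;> omega

end Descents

namespace Equiv.Perm

variable {n : ℕ}

def word (π : Perm (Fin n)) (i : ℕ) : ℕ := if h : i < n then π ⟨i, h⟩ else 0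

@[simp] theorem word_val (π : Perm (Fin n)) (i : Fin n) : π.word i = π i := by
  simp [word]

theorem permDES_eq_descentsOf_word (π : Perm (Fin n)) :
    permDES n π = descentsOf n π.word := by
  ext i
  simp only [permDES, mem_filter, mem_Ico, mem_descentsOf, word]
  constructor
  · rintro ⟨⟨h1, hn⟩, h, h', hlt⟩
    simp [h, h', Fin.lt_def.1 hlt, h1]
  · rintro ⟨h1, hn, hlt⟩
    rw [dif_pos hn, dif_pos (by omega)] at hlt
    exact ⟨⟨h1, hn⟩, hn, by omega, Fin.lt_def.2 hlt⟩

/-- The permutation whose word is that of `σ` with the new largest letter inserted at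
position `p`. -/
def insertMax (σ : Perm (Fin n)) (p : Fin (n + 1)) : Perm (Fin (n + 1)) :=
  (finSuccEquiv' p).trans (σ.optionCongr.trans finSuccEquivLast.symm)

@[simp] theorem insertMax_apply_self (σ : Perm (Fin n)) (p : Fin (n + 1)) :
    σ.insertMax p p = Fin.last n := by
  simp [insertMax]

@[simp] theorem insertMax_apply_succAbove (σ : Perm (Fin n)) (p : Fin (n + 1)) (j : Fin n) :
    σ.insertMax p (p.succAbove j) = (σ j).castSucc := by
  simp [insertMax]

theorem word_insertMax (σ : Perm (Fin n)) (p : Fin (n + 1)) :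
    (σ.insertMax p).word = insertAt σ.word p n := by
  funext i
  by_cases hi : i < n + 1
  swap
  · simp only [word, insertAt, dif_neg hi, dif_neg (show ¬ i - 1 < n by omega)]
    split_ifs <;> omega
  obtain ⟨i, rfl⟩ : ∃ j : Fin (n + 1), (j : ℕ) = i := ⟨⟨i, hi⟩, rfl⟩
  rcases p.eq_self_or_eq_succAbove i with rfl | ⟨j, rfl⟩
  · simp [insertAt]
  · rw [word_val, insertMax_apply_succAbove, Fin.val_castSucc, ← word_val, insertAt_succAbove]

theorem bijective_insertMax :
    Function.Bijective fun x : Perm (Fin n) × Fin (n + 1) => x.1.insertMax x.2 := by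
  rw [Fintype.bijective_iff_injective_and_card]
  refine ⟨fun ⟨σ, p⟩ ⟨τ, q⟩ h => ?_,
    by simp [Fintype.card_perm, Nat.factorial_succ, mul_comm]⟩
  simp only at h
  obtain rfl : p = q := by
    by_contra hne
    obtain ⟨j, hj⟩ := Fin.exists_succAbove_eq (Ne.symm hne)
    have := insertMax_apply_self τ q
    rw [← h, ← hj, insertMax_apply_succAbove] at this
    exact (Fin.castSucc_lt_last _).ne this
  obtain rfl : σ = τ := Equiv.ext fun j =>
    Fin.castSucc_injective n (by rw [← insertMax_apply_succAbove, h, insertMax_apply_succAbove])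
  rfl

theorem permDes_insertMax (σ : Perm (Fin n)) (p : Fin (n + 1)) :
    permDes (n + 1) (σ.insertMax p) =
      if (p : ℕ) ∈ insert n (permDES n σ) then permDes n σ else permDes n σ + 1 := by
  simp only [permDes, permDES_eq_descentsOf_word, word_insertMax]
  exact card_descentsOf_insertAt (fun i hi => by simp [word, hi]) p.is_le

theorem isEulerianRefinement_permDes (n : ℕ) :
    IsEulerianRefinement (Equiv.ofBijective _ (bijective_insertMax (n := n)))
      (permDes n) (permDes (n + 1)) := by
  refine .of_forall_eq_ite (fun σ p => (p : ℕ) ∈ insert n (permDES n σ))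
    (fun σ p => permDes_insertMax σ p) fun σ => ?_
  have hlt (i : ℕ) (hi : i ∈ permDES n σ) : i < n := (mem_Ico.1 (mem_filter.1 hi).1).2
  rw [card_filter_mem_of_injective Fin.val_injective,
    card_insert_of_notMem fun h => (hlt n h).false, permDes]
  intro i hi
  obtain rfl | hi := mem_insert.1 hi
  · exact ⟨Fin.last i, rfl⟩
  · exact ⟨⟨i, (hlt i hi).trans n.lt_succ_self⟩, rfl⟩

end Equiv.Perm

namespace InvTable

variable {n : ℕ}

def snoc (e : InvTable n) (v : Fin (n + 1)) : InvTable (n + 1) :=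
  ⟨Fin.snoc (fun i => (e.1 i).castSucc) v.succ,
    Fin.lastCases (by simp only [Fin.snoc_last, Fin.val_succ, Fin.val_last]; omega)
      fun i => by simpa using e.2 i⟩

def snocEquiv : InvTable n × Fin (n + 1) ≃ InvTable (n + 1) where
  toFun x := x.1.snoc x.2
  invFun e :=
    (⟨fun i => ⟨e.1 i.castSucc, (e.2 i.castSucc).2.trans_lt (by simp)⟩,
      fun i => by simpa using e.2 i.castSucc⟩,
     ⟨e.1 (Fin.last n) - 1, Nat.lt_succ_of_le (Nat.sub_le_of_le_add (e.2 (Fin.last n)).2)⟩)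
  left_inv x := by
    ext i <;> simp [snoc]
  right_inv e := by
    ext i : 2
    refine Fin.lastCases ?_ (fun i => ?_) i
    · have := (e.2 (Fin.last n)).1
      simp only [snoc, Fin.snoc_last, Fin.ext_iff, Fin.val_succ]
      omega
    · simp [snoc]

theorem image_snoc (e : InvTable n) (v : Fin (n + 1)) :
    univ.image (fun i => ((e.snoc v).1 i : ℕ)) =
      insert ((v : ℕ) + 1) (univ.image fun i => (e.1 i : ℕ)) := by
  ext m
  simp [snoc, Fin.exists_fin_succ', or_comm, eq_comm]

theorem mem_Icc_of_mem_invROW {e : InvTable n} {m : ℕ} (hm : m ∈ invROW n e) :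
    m ∈ Icc 2 n := by
  obtain ⟨hm, hm1⟩ := mem_sdiff.1 hm
  obtain ⟨i, -, rfl⟩ := mem_image.1 hm
  have := e.2 i
  rw [mem_singleton] at hm1
  simp only [mem_Icc]
  omega

theorem invRow_snoc (e : InvTable n) (v : Fin (n + 1)) :
    invRow (n + 1) (e.snoc v) =
      if (v : ℕ) + 1 ∈ insert 1 (invROW n e) then invRow n e else invRow n e + 1 := by
  have hrow : invROW (n + 1) (e.snoc v) =
      insert ((v : ℕ) + 1) (univ.image fun i => (e.1 i : ℕ)) \ {1} := by
    rw [invROW, image_snoc]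
  rw [invRow, hrow]
  by_cases hv : (v : ℕ) + 1 = 1
  · rw [insert_sdiff_of_mem _ (mem_singleton.2 hv), if_pos (by rw [hv]; exact mem_insert_self _ _)]
    rfl
  rw [insert_sdiff_of_notMem _ (by simpa using hv)]
  change #(insert _ (invROW n e)) = _
  by_cases hmem : (v : ℕ) + 1 ∈ invROW n e
  · rw [insert_eq_of_mem hmem, if_pos (mem_insert_of_mem hmem)]
    rfl
  · rw [card_insert_of_notMem hmem, if_neg (by rw [mem_insert, not_or]; exact ⟨hv, hmem⟩)]
    rfl

theorem isEulerianRefinement_invRow (n : ℕ) :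
    IsEulerianRefinement (snocEquiv (n := n)) (invRow n) (invRow (n + 1)) := by
  refine .of_forall_eq_ite (fun e v => (v : ℕ) + 1 ∈ insert 1 (invROW n e))
    (fun e v => invRow_snoc e v) fun e => ?_
  have h1 : 1 ∉ invROW n e := fun h => by simpa using mem_Icc_of_mem_invROW h
  rw [card_filter_mem_of_injective (f := fun v : Fin (n + 1) => (v : ℕ) + 1)
    (fun a b hab => Fin.ext (by simpa using hab)), card_insert_of_notMem h1, invRow]
  intro m hm
  obtain rfl | hm := mem_insert.1 hm
  · exact ⟨0, rfl⟩
  · have := mem_Icc.1 (mem_Icc_of_mem_invROW hm)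
    exact ⟨⟨m - 1, by omega⟩, by dsimp only; omega⟩

end InvTable

theorem row_eulerian_general (n : ℕ) (k : ℕ) :
    (Finset.univ.filter (fun e : InvTable n => invRow n e = k)).card =
    (Finset.univ.filter (fun π : Equiv.Perm (Fin n) => permDes n π = k)).card := by
  induction n generalizing k with
  | zero =>
    have hrow (e : InvTable 0) : invRow 0 e = 0 := by simp [invRow, invROW]
    have hdes (π : Equiv.Perm (Fin 0)) : permDes 0 π = 0 := by simp [permDes, permDES]
    have hcard : Fintype.card (InvTable 0) = 1 := by decide
    simp only [hrow, hdes, filter_const]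
    split_ifs <;> simp [hcard]
  | succ n ih =>
    exact (InvTable.isEulerianRefinement_invRow n).card_filter_eq_of_forall_card_filter_eq
      (Equiv.Perm.isEulerianRefinement_permDes n) ih k

/-- The number of inversion tables of length `n` with `row(e) = k` equals the
number of permutations of `{1,...,n}` with `des(π) = k` (the Eulerian number). -/
theorem row_eulerian (n : ℕ) (hn : 0 < n) (k : ℕ) :
    (Finset.univ.filter (fun e : InvTable n => invRow n e = k)).card =
    (Finset.univ.filter (fun π : Equiv.Perm (Fin n) => permDes n π = k)).card :=
  row_eulerian_general n k
end

section
/- For every positive integer n and all nonnegative integers m and k, the number of permutations π of {1,...,n} with maj(π) = m equals the number of inversion tables e of length n with amaj(e) = m; that is, maj on permutations of length n is equidistributed with amaj on inversion tables of length n. -/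
/-! Send a permutation `π` to its left-inversion code `e_i = 1 + #{j < i : π_j > π_i}`, an inversion
table. Comparing the sets counted at `i` and `i + 1` shows `π_{i+1} < π_i ↔ e_i < e_{i+1}`, so the
code carries `DES(π)` onto `ASC(e)` and `maj π = amaj e`. The code is injective: by strong induction
on `i`, for `j < i` the value `e_i` decides whether `π_i < π_j` from the relative order of
`π_1, …, π_{i-1}` alone. As both sides have `n!` elements, the code is a bijection. -/

open Finset

section LeftInversions

variable {α : Type*} [LinearOrder α] {n : ℕ}

def leftInvCount (f : Fin n → α) (i : Fin n) : ℕ := #{j | j < i ∧ f i < f j}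

lemma leftInvCount_le (f : Fin n → α) (i : Fin n) : leftInvCount f i ≤ i := by
  calc leftInvCount f i ≤ #(Iio i) := card_le_card fun j hj => mem_Iio.2 (mem_filter.1 hj).2.1
    _ = i := Fin.card_Iio i

lemma lt_iff_leftInvCount_lt (f : Fin n → α) {i k : Fin n} (hik : (i : ℕ) + 1 = k) :
    f k < f i ↔ leftInvCount f i < leftInvCount f k := by
  have hik' : i < k := Fin.lt_def.2 (by omega)
  constructor
  · intro hlt
    have hsub : insert i ({j | j < i ∧ f i < f j} : Finset (Fin n)) ⊆
        ({j | j < k ∧ f k < f j} : Finset (Fin n)) := by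
      intro j hj
      rcases mem_insert.1 hj with rfl | hj
      · simpa using ⟨hik', hlt⟩
      · simp only [mem_filter, mem_univ, true_and] at hj ⊢
        exact ⟨hj.1.trans hik', hlt.trans hj.2⟩
    simpa [leftInvCount] using card_le_card hsub
  · intro hcard
    by_contra! hle
    refine (card_le_card (fun j hj => ?_)).not_gt hcard
    simp only [mem_filter, mem_univ, true_and] at hj ⊢
    have hji : j ≠ i := by rintro rfl; exact (hle.trans_lt hj.2).false
    have hjk : (j : ℕ) < k := hj.1
    have := Fin.val_ne_of_ne hji
    exact ⟨Fin.lt_def.2 (by omega), hle.trans_lt hj.2⟩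

variable {f g : Fin n → α}

lemma lt_iff_card_le_leftInvCount (hf : Function.Injective f) {i j : Fin n} (hji : j < i) :
    f i < f j ↔ #{k | k < i ∧ f j ≤ f k} ≤ leftInvCount f i := by
  constructor
  · intro hlt
    exact card_le_card fun k hk => by
      simp only [mem_filter, mem_univ, true_and] at hk ⊢
      exact ⟨hk.1, hlt.trans_le hk.2⟩
  · intro hle
    by_contra! hge
    have hlt : f j < f i := hge.lt_of_ne (hf.ne hji.ne)
    refine hle.not_gt (card_lt_card ((ssubset_iff_of_subset fun k hk => ?_).2 ⟨j, ?_, ?_⟩))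
    · simp only [mem_filter, mem_univ, true_and] at hk ⊢
      exact ⟨hk.1, (hlt.trans hk.2).le⟩
    · simpa using hji
    · simp [hlt.le]

lemma lt_iff_lt_of_swap (hf : Function.Injective f) (hg : Function.Injective g) {a b : Fin n}
    (h : f b < f a ↔ g b < g a) : f a < f b ↔ g a < g b := by
  rcases eq_or_ne a b with rfl | hab
  · simp
  · rwa [← not_iff_not, not_lt, not_lt, (hf.ne hab.symm).le_iff_lt, (hg.ne hab.symm).le_iff_lt]

lemma lt_iff_lt_of_leftInvCount_eq (hf : Function.Injective f) (hg : Function.Injective g)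
    (h : leftInvCount f = leftInvCount g) (a b : Fin n) : f a < f b ↔ g a < g b := by
  have below : ∀ i j, j < i → (f i < f j ↔ g i < g j) := by
    intro i
    induction i using WellFoundedLT.induction with
    | _ i ih =>
      have lower : ∀ a b, a < i → b < i → (f a < f b ↔ g a < g b) := by
        intro a b ha hb
        rcases lt_trichotomy a b with hab | rfl | hab
        · exact lt_iff_lt_of_swap hf hg (ih b hb a hab)
        · simp
        · exact ih a ha b hab
      intro j hji
      have hcard : #{k | k < i ∧ f j ≤ f k} = #{k | k < i ∧ g j ≤ g k} := by
        congr 1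
        refine filter_congr fun k _ => and_congr_right fun hki => ?_
        rw [← not_lt, ← not_lt, lower k j hki hji]
      rw [lt_iff_card_le_leftInvCount hf hji, lt_iff_card_le_leftInvCount hg hji, hcard, h]
  rcases lt_trichotomy a b with hab | rfl | hab
  · exact lt_iff_lt_of_swap hf hg (below b a hab)
  · simp
  · exact below a b hab

end LeftInversions

theorem Equiv.Perm.eq_of_lt_iff_lt {β : Type*} [LinearOrder β] [Finite β] {π σ : Equiv.Perm β}
    (h : ∀ a b, π a < π b ↔ σ a < σ b) : π = σ := by
  have hmono : StrictMono (σ ∘ π.symm) := fun a b hab => by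
    simpa [← h] using hab
  ext a
  simpa using (hmono.apply_eq (x := π a)).symm

section InversionTables

variable {n : ℕ}

def Equiv.Perm.toInvTable (π : Equiv.Perm (Fin n)) : InvTable n :=
  ⟨fun i => ⟨leftInvCount π i + 1, by have := leftInvCount_le π i; omega⟩,
    fun i => ⟨Nat.le_add_left 1 _, Nat.add_le_add_right (leftInvCount_le π i) 1⟩⟩

lemma Equiv.Perm.toInvTable_injective : Function.Injective (Equiv.Perm.toInvTable (n := n)) := by
  intro π σ h
  have hcount : leftInvCount π = leftInvCount σ := funext fun i => by
    simpa [Equiv.Perm.toInvTable] using congrArg (fun e : InvTable n => (e.1 i : ℕ)) h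
  exact Equiv.Perm.eq_of_lt_iff_lt
    (lt_iff_lt_of_leftInvCount_eq π.injective σ.injective hcount)

lemma invASC_toInvTable (π : Equiv.Perm (Fin n)) : invASC n π.toInvTable = permDES n π := by
  refine filter_congr fun i hi => ?_
  obtain ⟨hi1, hin⟩ := mem_Ico.1 hi
  simp only [Equiv.Perm.toInvTable, hin, exists_true_left, Nat.add_lt_add_iff_right]
  exact exists_congr fun _ => (lt_iff_leftInvCount_lt π (by simp; omega)).symm

lemma invAmaj_toInvTable (π : Equiv.Perm (Fin n)) : invAmaj n π.toInvTable = permMaj n π := by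
  rw [invAmaj, permMaj, invASC_toInvTable]

def invTableEquivPi : InvTable n ≃ ((i : Fin n) → Fin ((i : ℕ) + 1)) where
  toFun e i := ⟨(e.1 i : ℕ) - 1, by have := e.2 i; omega⟩
  invFun g := ⟨fun i => ⟨(g i : ℕ) + 1, by have := (g i).isLt; have := i.isLt; omega⟩,
    fun i => by have := (g i).isLt; simp only; omega⟩
  left_inv e := by
    ext i
    have := e.2 i
    simp only
    omega
  right_inv g := by
    funext i
    simp

lemma card_invTable : Fintype.card (InvTable n) = n.factorial := by
  rw [Fintype.card_congr invTableEquivPi, Fintype.card_pi]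
  simp only [Fintype.card_fin]
  rw [Fin.prod_univ_eq_prod_range (· + 1), prod_range_add_one_eq_factorial]

lemma Equiv.Perm.toInvTable_bijective : Function.Bijective (Equiv.Perm.toInvTable (n := n)) := by
  rw [Fintype.bijective_iff_injective_and_card, card_invTable, Fintype.card_perm, Fintype.card_fin]
  exact ⟨toInvTable_injective, rfl⟩

end InversionTables

theorem maj_equidistributed_amaj_general (n : ℕ) (m : ℕ) :
    (Finset.univ.filter (fun π : Equiv.Perm (Fin n) => permMaj n π = m)).card =
    (Finset.univ.filter (fun e : InvTable n => invAmaj n e = m)).card :=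
  card_bijective _ Equiv.Perm.toInvTable_bijective fun π => by simp [invAmaj_toInvTable]

/-- `maj` on permutations of length `n` is equidistributed with `amaj` on
inversion tables of length `n`. -/
theorem maj_equidistributed_amaj (n : ℕ) (hn : 0 < n) (m : ℕ) :
    (Finset.univ.filter (fun π : Equiv.Perm (Fin n) => permMaj n π = m)).card =
    (Finset.univ.filter (fun e : InvTable n => invAmaj n e = m)).card :=
  maj_equidistributed_amaj_general n m
end

section
/- For all nonnegative integers r, s, p, t with p ≤ r, the number of (r+1)-tuples (x_0, x_1, ..., x_r) of nonnegative integers satisfying ∑_{i=0}^{r} x_i = s and ∑_{i=0}^{p} (x_i - 1)_+ + ∑_{i=p+1}^{r} x_i = t equals binom(p+1, s-t) · binom(r+s-p-1, t). -/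
/-!
Write `A = {0, …, p}`. For a tuple `x` let `S` be the set of `i ∈ A` with `x i ≠ 0`; each such
index loses exactly one in the second sum, so `#S = s - t`. Subtracting `1` on `S` identifies the
tuples with a given `S` with the tuples of sum `t` vanishing on `A \ S`, and stars and bars counts
these as `binom(r + s - p - 1, t)` whatever `S` is. There are `binom(p + 1, s - t)` choices of `S`.
-/

open Finset

theorem Finset.card_piAntidiag_nat {ι : Type*} [DecidableEq ι] (s : Finset ι) (n : ℕ) :
    #(s.piAntidiag n) = (#s + n - 1).choose n := by
  rw [← card_finsuppAntidiag_nat_eq_choose, finsuppAntidiag, card_map, card_attach]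

theorem Finset.mem_piAntidiag_univ {ι : Type*} [Fintype ι] [DecidableEq ι] {f : ι → ℕ} {n : ℕ} :
    f ∈ univ.piAntidiag n ↔ ∑ i, f i = n := by
  simp

section Excess

variable {α : Type*} [Fintype α] [DecidableEq α]

/-- For `A = {0, …, p}` this is `∑_{i ≤ p} (x_i - 1)_+ + ∑_{i > p} x_i`; truncated subtraction on `ℕ`
is exactly `(·)_+`. -/
def excess (A : Finset α) (x : α → ℕ) : ℕ :=
  ∑ i, if i ∈ A then x i - 1 else x i

theorem sum_eq_excess_add_card (A : Finset α) (x : α → ℕ) :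
    ∑ i, x i = excess A x + #{i ∈ A | x i ≠ 0} := by
  have hfilter : {i ∈ A | x i ≠ 0} = ({i | i ∈ A ∧ x i ≠ 0} : Finset α) := by ext; simp
  rw [excess, hfilter, card_filter, ← sum_add_distrib]
  refine sum_congr rfl fun i _ => ?_
  split_ifs <;> grind

theorem sum_add_ite_mem (S : Finset α) (y : α → ℕ) :
    ∑ i, (y i + if i ∈ S then 1 else 0) = ∑ i, y i + #S := by
  rw [sum_add_distrib, sum_boole, filter_mem_eq_inter, univ_inter, Nat.cast_id]

theorem card_filter_support_inter_eq {A S : Finset α} (hSA : S ⊆ A) {s : ℕ} (hs : #S ≤ s) :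
    #{x ∈ univ.piAntidiag s | {i ∈ A | x i ≠ 0} = S} =
      #{y ∈ univ.piAntidiag (s - #S) | ∀ i ∈ A \ S, y i = 0} := by
  have hsupport : ∀ x : α → ℕ, {i ∈ A | x i ≠ 0} = S →
      ∀ i, ((if i ∈ S then x i - 1 else x i) + if i ∈ S then 1 else 0) = x i := by
    rintro x rfl i
    split_ifs with hi
    · rw [mem_filter] at hi; omega
    · rfl
  refine card_nbij' (fun x i => if i ∈ S then x i - 1 else x i)
    (fun y i => y i + if i ∈ S then 1 else 0) ?_ ?_ ?_ ?_
  · intro x hx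
    simp only [coe_filter, mem_piAntidiag_univ, Set.mem_ofPred_eq] at hx ⊢
    obtain ⟨hsum, hS⟩ := hx
    have hsum' := sum_add_ite_mem S fun i => if i ∈ S then x i - 1 else x i
    simp only [hsupport x hS] at hsum'
    refine ⟨eq_tsub_of_add_eq (hsum'.symm.trans hsum), fun i hi => ?_⟩
    obtain ⟨hiA, hiS⟩ := mem_sdiff.1 hi
    rw [if_neg hiS]
    by_contra hx0
    exact hiS (hS ▸ mem_filter.2 ⟨hiA, hx0⟩)
  · intro y hy
    simp only [coe_filter, mem_piAntidiag_univ, Set.mem_ofPred_eq] at hy ⊢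
    obtain ⟨hsum, hvanish⟩ := hy
    refine ⟨by rw [sum_add_ite_mem, hsum, Nat.sub_add_cancel hs], ?_⟩
    ext i
    by_cases hiS : i ∈ S
    · simp [hiS, hSA hiS]
    · by_cases hiA : i ∈ A
      · simp [hiS, hvanish i (mem_sdiff.2 ⟨hiA, hiS⟩)]
      · simp [hiS, hiA]
  · intro x hx
    simp only [coe_filter, Set.mem_ofPred_eq] at hx
    exact funext (hsupport x hx.2)
  · intro y _
    funext i
    by_cases hi : i ∈ S <;> simp [hi]

theorem card_filter_piAntidiag_univ_vanishing (D : Finset α) (n : ℕ) :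
    #{y ∈ (univ : Finset α).piAntidiag n | ∀ i ∈ D, y i = 0} =
      (Fintype.card α - #D + n - 1).choose n := by
  have hfilter : {y ∈ (univ : Finset α).piAntidiag n | ∀ i ∈ D, y i = 0} = Dᶜ.piAntidiag n := by
    ext y
    have hvanish : (∀ i ∈ D, y i = 0) ↔ ∀ i, y i ≠ 0 → i ∈ Dᶜ := by
      simp only [mem_compl, not_imp_not]
    rw [mem_filter, mem_piAntidiag_univ, mem_piAntidiag, hvanish]
    refine and_congr_left fun hsupp => ?_
    rw [sum_subset (subset_univ Dᶜ) fun i _ hi => not_imp_comm.1 (hsupp i) hi]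
  rw [hfilter, card_piAntidiag_nat, card_compl]

theorem card_filter_excess_eq_of_le (A : Finset α) {s t : ℕ} (hts : t ≤ s) :
    #{x ∈ (univ : Finset α).piAntidiag s | excess A x = t} =
      (#A).choose (s - t) * (Fintype.card α - #A + s - 1).choose t := by
  have hmaps : ∀ x ∈ {x ∈ (univ : Finset α).piAntidiag s | excess A x = t},
      {i ∈ A | x i ≠ 0} ∈ A.powersetCard (s - t) := by
    intro x hx
    simp only [mem_filter, mem_piAntidiag_univ] at hx
    have := sum_eq_excess_add_card A x
    rw [mem_powersetCard]
    exact ⟨filter_subset _ _, by omega⟩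
  have hfiber : ∀ S ∈ A.powersetCard (s - t),
      #{x ∈ {x ∈ (univ : Finset α).piAntidiag s | excess A x = t} | {i ∈ A | x i ≠ 0} = S} =
        (Fintype.card α - #A + s - 1).choose t := by
    intro S hS
    rw [mem_powersetCard] at hS
    obtain ⟨hSA, hScard⟩ := hS
    have hexcess : ∀ x ∈ (univ : Finset α).piAntidiag s,
        excess A x = t ∧ {i ∈ A | x i ≠ 0} = S ↔ {i ∈ A | x i ≠ 0} = S := by
      intro x hx
      refine ⟨And.right, fun hS => ⟨?_, hS⟩⟩
      have := sum_eq_excess_add_card A x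
      rw [mem_piAntidiag_univ] at hx
      rw [hS] at this
      omega
    have hA : #A ≤ Fintype.card α := card_le_univ A
    have hkA : s - t ≤ #A := hScard ▸ card_le_card hSA
    rw [filter_filter, filter_congr hexcess, card_filter_support_inter_eq hSA (by omega),
      card_filter_piAntidiag_univ_vanishing, card_sdiff_of_subset hSA, hScard,
      Nat.sub_sub_self hts]
    congr 1
    omega
  rw [card_eq_sum_card_fiberwise hmaps, sum_congr rfl hfiber, sum_const, card_powersetCard,
    smul_eq_mul]

theorem filter_excess_eq_eq_empty_of_lt (A : Finset α) {s t : ℕ} (hst : s < t) :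
    {x ∈ (univ : Finset α).piAntidiag s | excess A x = t} = ∅ := by
  refine filter_false_of_mem fun x hx hxt => ?_
  have := sum_eq_excess_add_card A x
  rw [mem_piAntidiag_univ] at hx
  omega

end Excess

/-- For nonnegative integers `r, s, p, t` with `p ≤ r`, the number of
`(r+1)`-tuples `(x_0, ..., x_r)` of nonnegative integers with
`∑ x_i = s` and `∑_{i=0}^{p} (x_i - 1)_+ + ∑_{i=p+1}^{r} x_i = t` equals
`binom(p+1, s-t) * binom(r+s-p-1, t)`, where the first factor is interpreted
as `0` when `s - t` would be negative (i.e. `t > s`).  Note that for natural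
numbers, truncated subtraction gives `x_i - 1 = (x_i - 1)_+`. -/
theorem count_tuples_binomial (r s p t : ℕ) (hpr : p ≤ r) :
    {x : Fin (r + 1) → ℕ |
        (∑ i, x i) = s ∧
        (∑ i : Fin (r + 1), if (i : ℕ) ≤ p then x i - 1 else x i) = t}.ncard =
    (if t ≤ s then Nat.choose (p + 1) (s - t) else 0) *
      Nat.choose (r + s - p - 1) t := by
  set A : Finset (Fin (r + 1)) := {i | (i : ℕ) ≤ p}
  have hA : #A = p + 1 := by
    rw [show A = Iic ⟨p, by omega⟩ by ext i; simp [A, Fin.le_def], Fin.card_Iic]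
  have hset : {x : Fin (r + 1) → ℕ |
      (∑ i, x i) = s ∧ (∑ i : Fin (r + 1), if (i : ℕ) ≤ p then x i - 1 else x i) = t} =
      ↑{x ∈ (univ : Finset (Fin (r + 1))).piAntidiag s | excess A x = t} := by
    ext x
    simp [excess, A]
  rw [hset, Set.ncard_coe_finset]
  split_ifs with hts
  · rw [card_filter_excess_eq_of_le A hts, hA, Fintype.card_fin]
    congr 2
    omega
  · rw [filter_excess_eq_eq_empty_of_lt A (not_le.1 hts), card_empty, zero_mul]
end

section
/- For all nonnegative integers r, s, p, t with p ≤ r, the number of (r+1)-tuples (x_0, x_1, ..., x_r) of nonnegative integers satisfying ∑_{i=0}^{r} x_i = s and ∑_{i=0}^{p} (x_i - 1)_+ + ∑_{i=p+1}^{r} x_i = t equals the number of subsets T of {1,...,r+s} with #T = s and #(T ∩ {p+2, p+3, ..., r+s}) = t. -/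
/-!
Both sides equal `C(p+1, s-t) · C(r+s-p-1, t)` (and vanish for `t > s`). For a tuple with sum `s`,
the second sum is `s - k`, where `k` counts the nonzero entries among `x_0, …, x_p`. Choose which
`k` of them are nonzero and subtract `1` from each: what remains is an arbitrary tuple of sum `t`
supported on those `k` entries and the last `r - p`, counted by stars and bars. A subset `T`
splits into `T ∩ {p+2, …, r+s}`, of size `t`, and `s - t` elements of `{1, …, p+1}`.
-/

open Finset

namespace Finset

variable {ι : Type*} [DecidableEq ι]

theorem card_piAntidiag_nat_s11 (s : Finset ι) (n : ℕ) :
    #(s.piAntidiag n) = (#s).multichoose n := by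
  rw [← card_finsuppAntidiag_nat_eq_multichoose, finsuppAntidiag, card_map, card_attach]

variable [Fintype ι]

theorem sum_ite_tsub_one_add_card_filter_ne_zero (P : Finset ι) (x : ι → ℕ) :
    (∑ i, if i ∈ P then x i - 1 else x i) + #{i ∈ P | x i ≠ 0} = ∑ i, x i := by
  rw [card_filter, ← sum_ite_mem_eq P (fun i => if x i ≠ 0 then 1 else 0), ← sum_add_distrib]
  exact sum_congr rfl fun i _ => by grind

theorem filter_piAntidiag_univ_forall_eq_zero (R : Finset ι) (m : ℕ) :
    {y ∈ (univ : Finset ι).piAntidiag m | ∀ i ∈ R, y i = 0} = Rᶜ.piAntidiag m := by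
  ext y
  have hsplit := sum_compl_add_sum R y
  simp only [mem_filter, mem_piAntidiag, mem_univ, implies_true, and_true, mem_compl]
  constructor
  · rintro ⟨hsum, hR⟩
    rw [sum_eq_zero hR, add_zero] at hsplit
    exact ⟨hsplit.trans hsum, fun i hi hiR => hi (hR i hiR)⟩
  · rintro ⟨hsum, hsupp⟩
    have hR : ∀ i ∈ R, y i = 0 := fun i hi => by_contra fun h => hsupp i h hi
    rw [sum_eq_zero hR, add_zero] at hsplit
    exact ⟨hsplit.symm.trans hsum, hR⟩

theorem card_filter_piAntidiag_univ_filter_ne_zero_eq {P S : Finset ι} {n : ℕ} (hSP : S ⊆ P)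
    (hSn : #S ≤ n) :
    #{x ∈ univ.piAntidiag n | {i ∈ P | x i ≠ 0} = S} =
      #{y ∈ univ.piAntidiag (n - #S) | ∀ i ∈ P \ S, y i = 0} := by
  have hS : ∑ i, (if i ∈ S then 1 else 0 : ℕ) = #S := by simp
  refine card_nbij' (fun x i => x i - if i ∈ S then 1 else 0)
    (fun y i => y i + if i ∈ S then 1 else 0) ?_ ?_ ?_ ?_
  · intro x hx
    simp only [coe_filter, Set.mem_ofPred_eq, mem_piAntidiag, mem_univ, implies_true, and_true,
      Finset.ext_iff, mem_filter, mem_sdiff] at hx ⊢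
    obtain ⟨hsum, hfib⟩ := hx
    refine ⟨?_, fun i ⟨hiP, hiS⟩ => ?_⟩
    · rw [sum_tsub_distrib _ fun i _ => ?_, hsum, hS]
      grind
    · grind
  · intro y hy
    simp only [coe_filter, Set.mem_ofPred_eq, mem_piAntidiag, mem_univ, implies_true, and_true,
      Finset.ext_iff, mem_filter, mem_sdiff] at hy ⊢
    obtain ⟨hsum, hzero⟩ := hy
    refine ⟨?_, fun i => ?_⟩
    · rw [sum_add_distrib, hsum, hS]
      omega
    · grind
  · intro x hx
    simp only [coe_filter, Set.mem_ofPred_eq, Finset.ext_iff, mem_filter] at hx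
    funext i
    grind
  · intro y _
    simp

theorem card_filter_piAntidiag_univ_card_filter_ne_zero (P : Finset ι) {n k : ℕ} (hk : k ≤ n) :
    #{x ∈ univ.piAntidiag n | #{i ∈ P | x i ≠ 0} = k} =
      (#P).choose k * (k + #Pᶜ).multichoose (n - k) := by
  have hmaps : ∀ x ∈ {x ∈ (univ : Finset ι).piAntidiag n | #{i ∈ P | x i ≠ 0} = k},
      {i ∈ P | x i ≠ 0} ∈ P.powersetCard k :=
    fun x hx => mem_powersetCard.2 ⟨filter_subset _ _, (mem_filter.1 hx).2⟩
  rw [card_eq_sum_card_fiberwise hmaps, ← card_powersetCard, ← smul_eq_mul, ← sum_const]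
  refine sum_congr rfl fun S hS => ?_
  obtain ⟨hSP, rfl⟩ := mem_powersetCard.1 hS
  have hcard : #(P \ S)ᶜ = #S + #Pᶜ := by
    rw [card_compl, card_compl, card_sdiff_of_subset hSP]
    have := card_le_univ P
    have := card_le_card hSP
    omega
  rw [filter_filter, filter_congr fun x _ => and_iff_right_of_imp
      fun h : {i ∈ P | x i ≠ 0} = S => h ▸ rfl,
    card_filter_piAntidiag_univ_filter_ne_zero_eq hSP hk,
    filter_piAntidiag_univ_forall_eq_zero, card_piAntidiag_nat_s11, hcard]

theorem ncard_sum_eq_and_sum_ite_tsub_one_eq (P : Finset ι) (n m : ℕ) :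
    {x : ι → ℕ | ∑ i, x i = n ∧ (∑ i, if i ∈ P then x i - 1 else x i) = m}.ncard =
      if m ≤ n then (#P).choose (n - m) * (n - m + #Pᶜ).multichoose m else 0 := by
  split_ifs with hmn
  · have hset :
        {x : ι → ℕ | ∑ i, x i = n ∧ (∑ i, if i ∈ P then x i - 1 else x i) = m} =
          ↑{x ∈ (univ : Finset ι).piAntidiag n | #{i ∈ P | x i ≠ 0} = n - m} := by
      ext x
      have := sum_ite_tsub_one_add_card_filter_ne_zero P x
      simp only [Set.mem_ofPred_eq, coe_filter, mem_piAntidiag, mem_univ, implies_true, and_true]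
      change _ ↔ ∑ i, x i = n ∧ _
      omega
    rw [hset, Set.ncard_coe_finset, card_filter_piAntidiag_univ_card_filter_ne_zero P (by omega),
      Nat.sub_sub_self hmn]
  · convert Set.ncard_empty (ι → ℕ)
    refine Set.eq_empty_of_forall_notMem fun x ⟨hsum, hm⟩ => ?_
    have := sum_ite_tsub_one_add_card_filter_ne_zero P x
    omega

variable {α : Type*} [DecidableEq α]

theorem card_filter_powerset_card_inter_of_le {I J : Finset α} (hJI : J ⊆ I) {s t : ℕ}
    (hts : t ≤ s) :
    #{T ∈ I.powerset | #T = s ∧ #(T ∩ J) = t} =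
      (#(I \ J)).choose (s - t) * (#J).choose t := by
  rw [← card_powersetCard, ← card_powersetCard, ← card_product]
  refine card_nbij' (fun T => (T \ J, T ∩ J)) (fun AB => AB.1 ∪ AB.2) ?_ ?_ ?_ ?_
  · intro T hT
    simp only [coe_filter, mem_powerset, Set.mem_ofPred_eq, mem_coe, mem_product,
      mem_powersetCard] at hT ⊢
    have := card_sdiff_add_card_inter T J
    grind
  · rintro ⟨A, B⟩ hAB
    simp only [mem_coe, mem_product, mem_powersetCard, coe_filter, mem_powerset,
      Set.mem_ofPred_eq] at hAB ⊢
    obtain ⟨⟨hA, hAcard⟩, hB, hBcard⟩ := hAB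
    have hdisj : Disjoint A B :=
      disjoint_of_subset_left hA (disjoint_of_subset_right hB disjoint_sdiff_self_left)
    have hinter : (A ∪ B) ∩ J = B := by grind
    grind [card_union_of_disjoint]
  · intro T _
    exact sdiff_union_inter T J
  · rintro ⟨A, B⟩ hAB
    simp only [mem_coe, mem_product, mem_powersetCard] at hAB
    obtain ⟨⟨hA, -⟩, hB, -⟩ := hAB
    ext <;> grind

theorem card_filter_powerset_card_inter_eq {I J : Finset α} (hJI : J ⊆ I) (s t : ℕ) :
    #{T ∈ I.powerset | #T = s ∧ #(T ∩ J) = t} =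
      if t ≤ s then (#(I \ J)).choose (s - t) * (#J).choose t else 0 := by
  split_ifs with hts
  · exact card_filter_powerset_card_inter_of_le hJI hts
  · refine card_eq_zero.2 (filter_eq_empty_iff.2 fun T _ ⟨hT, hTJ⟩ => ?_)
    have := card_le_card (inter_subset_left (s₁ := T) (s₂ := J))
    omega

end Finset

/-- For nonnegative integers `r, s, p, t` with `p ≤ r`, the number of
`(r+1)`-tuples `(x_0, ..., x_r)` of nonnegative integers with `∑ x_i = s` and
`∑_{i=0}^{p} (x_i - 1)_+ + ∑_{i=p+1}^{r} x_i = t` equals the number of subsets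
`T ⊆ {1,...,r+s}` with `#T = s` and `#(T ∩ {p+2,...,r+s}) = t`.  Note that for
natural numbers, truncated subtraction gives `x_i - 1 = (x_i - 1)_+`. -/
theorem count_tuples_eq_count_subsets (r s p t : ℕ) (hpr : p ≤ r) :
    {x : Fin (r + 1) → ℕ |
        (∑ i, x i) = s ∧
        (∑ i : Fin (r + 1), if (i : ℕ) ≤ p then x i - 1 else x i) = t}.ncard =
    ((Finset.Icc 1 (r + s)).powerset.filter
      (fun T => T.card = s ∧ (T ∩ Finset.Icc (p + 2) (r + s)).card = t)).card := by
  have hP (i : Fin (r + 1)) : (i : ℕ) ≤ p ↔ i ∈ Iic ⟨p, Nat.lt_succ_of_le hpr⟩ := by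
    rw [mem_Iic, Fin.le_def]
  simp only [hP]
  rw [ncard_sum_eq_and_sum_ite_tsub_one_eq, card_filter_powerset_card_inter_eq
    (Icc_subset_Icc (by omega) le_rfl), card_compl, Fin.card_Iic, Fin.val_mk, Fintype.card_fin,
    card_sdiff_of_subset (Icc_subset_Icc (by omega) le_rfl), Nat.card_Icc, Nat.card_Icc]
  split_ifs with hts
  · -- `{1, …, r+s} \ {p+2, …, r+s}` has `min (p+1) (r+s)` elements, hence the case `s = 0`
    rcases Nat.eq_zero_or_pos s with rfl | hs
    · obtain rfl : t = 0 := by omega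
      simp
    · rw [Nat.multichoose_eq]
      congr 2 <;> omega
  · rfl
end
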